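/- Let q ≥ 1 and β > 0, and set Z = (q − 1) e^{−β} + e^{β(q−1)}. Then (e^{−β}/Z) · [ qβ + Σ_{k=1}^∞ (2β/(k+1)) · q^k β^k / k! ] = (1/q) · (2 e^{βq} − 2 + βq(q − 2)) / (e^{βq} + q − 1). Equivalently, if D has mass function P(D = k) = (e^{−β}/Z) q^{max(k,1)} β^k / k!, then β · P(D = 0) + Σ_{k=1}^∞ (2β/(k+1)) · P(D = k) = q F_q(β, λ) / λ, where F_q(β, λ) = (λ/q²) · (2 e^{βq} − 2 + βq(q − 2)) / (e^{βq} + q − 1). -/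

import Mathlib

open Real

/-- The mass function of the number `D` of cuts on a time-line in the product random-cluster
model on `K_n × [0, β]`: `P(D = k) = e^{−β} q^{max(k,1)} β^k / (k! · Z)` with
`Z = (q − 1)e^{−β} + e^{β(q−1)}`. -/
noncomputable def cutMass (q β : ℝ) (k : ℕ) : ℝ :=
  exp (-β) * q ^ (max k 1) * β ^ k / (Nat.factorial k * ((q - 1) * exp (-β) + exp (β * (q - 1))))

/-- `F_q(β, λ) = (λ/q²) · (2e^{βq} − 2 + βq(q − 2)) / (e^{βq} + q − 1)`. -/
noncomputable def contFq (q β lam : ℝ) : ℝ :=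
  lam / q ^ 2 * ((2 * exp (β * q) - 2 + β * q * (q - 2)) / (exp (β * q) + q - 1))

/-! Dividing by `k + 2` turns `(qβ)^(k+1)/(k+1)!` into `(qβ)^(k+2)/(k+2)!`, so the series is a
tail of the exponential series and sums to `(2/q)(e^{βq} − 1 − βq)`. Together with the
factorisation `Z = e^{−β}(e^{βq} + q − 1)` the identity becomes an equality of rational
functions in `e^{βq}`, `β` and `q`. -/

theorem hasSum_pow_div_factorial_add_two (x : ℝ) :
    HasSum (fun k : ℕ => x ^ (k + 2) / (k + 2).factorial) (exp x - 1 - x) := by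
  have hexp : HasSum (fun n : ℕ => x ^ n / n.factorial) (exp x) := by
    simpa only [Real.exp_eq_exp_ℝ] using NormedSpace.expSeries_div_hasSum_exp x
  simpa [Finset.sum_range_succ, sub_sub] using (hasSum_nat_add_iff' 2).mpr hexp

theorem hasSum_two_mul_div_add_two_mul_pow_div_factorial {q : ℝ} (hq : q ≠ 0) (β : ℝ) :
    HasSum (fun k : ℕ => 2 * β / ((k : ℝ) + 2) * (q ^ (k + 1) * β ^ (k + 1) / (k + 1).factorial))
      (2 / q * (exp (β * q) - 1 - β * q)) := by
  refine ((hasSum_pow_div_factorial_add_two (β * q)).mul_left (2 / q)).congr_fun fun k => ?_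
  rw [Nat.factorial_succ (k + 1)]
  push_cast
  field_simp
  ring

theorem sub_one_mul_exp_neg_add_exp_mul_sub_one (q β : ℝ) :
    (q - 1) * exp (-β) + exp (β * (q - 1)) = exp (-β) * (exp (β * q) + q - 1) := by
  rw [show β * (q - 1) = β * q + -β by ring, exp_add]
  ring

theorem cutMass_zero (q β : ℝ) :
    cutMass q β 0 = exp (-β) / ((q - 1) * exp (-β) + exp (β * (q - 1))) * q := by
  simp only [cutMass, Nat.zero_max, pow_one, pow_zero, Nat.factorial_zero, Nat.cast_one, one_mul,
    mul_one]
  ring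

theorem cutMass_succ (q β : ℝ) (k : ℕ) :
    cutMass q β (k + 1) = exp (-β) / ((q - 1) * exp (-β) + exp (β * (q - 1))) *
      (q ^ (k + 1) * β ^ (k + 1) / (k + 1).factorial) := by
  rw [cutMass, max_eq_left (Nat.succ_pos k)]
  simp only [div_eq_mul_inv, mul_inv]
  ring

theorem mean_arc_length_eq {q : ℝ} (hq : 1 ≤ q) (β : ℝ) :
    (exp (-β) / ((q - 1) * exp (-β) + exp (β * (q - 1)))) *
        (q * β + ∑' k : ℕ,
          (2 * β / ((k : ℝ) + 2)) * (q ^ (k + 1) * β ^ (k + 1) / (Nat.factorial (k + 1))))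
      = (1 / q) * ((2 * exp (β * q) - 2 + β * q * (q - 2)) / (exp (β * q) + q - 1)) := by
  have hq0 : q ≠ 0 := by linarith
  have hden : exp (β * q) + q - 1 ≠ 0 := by linarith [exp_pos (β * q)]
  rw [(hasSum_two_mul_div_add_two_mul_pow_div_factorial hq0 β).tsum_eq,
    sub_one_mul_exp_neg_add_exp_mul_sub_one]
  field_simp
  ring

theorem mul_contFq_div {q lam : ℝ} (hq : q ≠ 0) (hlam : lam ≠ 0) (β : ℝ) :
    q * contFq q β lam / lam
      = 1 / q * ((2 * exp (β * q) - 2 + β * q * (q - 2)) / (exp (β * q) + q - 1)) := by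
  rw [contFq]
  field_simp

theorem mean_cutfree_interval_length_general (q β : ℝ) (hq : 1 ≤ q) :
    (exp (-β) / ((q - 1) * exp (-β) + exp (β * (q - 1)))) *
        (q * β + ∑' k : ℕ,
          (2 * β / ((k : ℝ) + 2)) * (q ^ (k + 1) * β ^ (k + 1) / (Nat.factorial (k + 1))))
      = (1 / q) * ((2 * exp (β * q) - 2 + β * q * (q - 2)) / (exp (β * q) + q - 1)) ∧
    (∀ lam : ℝ, 0 < lam →
      β * cutMass q β 0 + ∑' k : ℕ, (2 * β / ((k : ℝ) + 2)) * cutMass q β (k + 1)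
        = q * contFq q β lam / lam) := by
  refine ⟨mean_arc_length_eq hq β, fun lam hlam => ?_⟩
  rw [mul_contFq_div (by linarith) hlam.ne', ← mean_arc_length_eq hq β]
  simp_rw [cutMass_zero, cutMass_succ, mul_left_comm (2 * β / _), tsum_mul_left]
  ring

/-- For `q ≥ 1`, `β > 0`, with `Z = (q−1)e^{−β} + e^{β(q−1)}`:
`(e^{−β}/Z)·[qβ + Σ_{k≥1} (2β/(k+1)) q^k β^k / k!]
  = (1/q)·(2e^{βq} − 2 + βq(q−2))/(e^{βq} + q − 1)`.
Equivalently, for the mass function `p(k) = (e^{−β}/Z) q^{max(k,1)} β^k / k!`,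
`β·p(0) + Σ_{k≥1} (2β/(k+1))·p(k) = q F_q(β,λ)/λ`. (In the sums below the index `k ≥ 1` is
written as `k + 1` with `k` ranging over `ℕ`.) -/
theorem mean_cutfree_interval_length (q β : ℝ) (hq : 1 ≤ q) (hβ : 0 < β) :
    (exp (-β) / ((q - 1) * exp (-β) + exp (β * (q - 1)))) *
        (q * β + ∑' k : ℕ,
          (2 * β / ((k : ℝ) + 2)) * (q ^ (k + 1) * β ^ (k + 1) / (Nat.factorial (k + 1))))
      = (1 / q) * ((2 * exp (β * q) - 2 + β * q * (q - 2)) / (exp (β * q) + q - 1)) ∧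
    (∀ lam : ℝ, 0 < lam →
      β * cutMass q β 0 + ∑' k : ℕ, (2 * β / ((k : ℝ) + 2)) * cutMass q β (k + 1)
        = q * contFq q β lam / lam) :=
  mean_cutfree_interval_length_general q β hq
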